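/- arXiv:2008.10564 — 3 statements merged into one kernel-verified Lean document; each statement's English description precedes it below -/
import Mathlib

section
/- Let d ≥ 2 be an integer and let (a_n)_{n∈ℕ} be a strictly decreasing sequence of positive reals converging to 0. Then for every θ ∈ (0,1], updim_θ(C^d({a_n})) ≤ d - 1 + updim_θ({a_n : n ∈ ℕ}) and lodim_θ(C^d({a_n})) ≤ d - 1 + lodim_θ({a_n : n ∈ ℕ}). -/
open Set Metric Filter

/-- The upper θ-intermediate dimension of a set `E` in a metric space:
the infimum of all `s ≥ 0` such that for every `ε > 0` there is `δ₀ > 0` such that for all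
`0 < δ < δ₀` there is a countable cover `𝒰` of `E` with `δ ≤ diam U ≤ δ ^ θ` for all `U ∈ 𝒰`
and `∑_{U ∈ 𝒰} (diam U) ^ s ≤ ε`. -/
noncomputable def updim {X : Type*} [PseudoMetricSpace X] (θ : ℝ) (E : Set X) : ℝ :=
  sInf {s : ℝ | 0 ≤ s ∧ ∀ ε : ℝ, 0 < ε → ∃ δ₀ : ℝ, 0 < δ₀ ∧ ∀ δ : ℝ, 0 < δ → δ < δ₀ →
    ∃ 𝒰 : Set (Set X), 𝒰.Countable ∧ E ⊆ ⋃₀ 𝒰 ∧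
      (∀ U ∈ 𝒰, δ ≤ diam U ∧ diam U ≤ δ ^ θ) ∧
      ∑' U : 𝒰, ENNReal.ofReal (diam (U : Set X) ^ s) ≤ ENNReal.ofReal ε}

/-- The lower θ-intermediate dimension of a set `E` in a metric space. -/
noncomputable def lodim {X : Type*} [PseudoMetricSpace X] (θ : ℝ) (E : Set X) : ℝ :=
  sInf {s : ℝ | 0 ≤ s ∧ ∀ ε : ℝ, 0 < ε → ∀ δ₀ : ℝ, 0 < δ₀ → ∃ δ : ℝ, 0 < δ ∧ δ < δ₀ ∧
    ∃ 𝒰 : Set (Set X), 𝒰.Countable ∧ E ⊆ ⋃₀ 𝒰 ∧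
      (∀ U ∈ 𝒰, δ ≤ diam U ∧ diam U ≤ δ ^ θ) ∧
      ∑' U : 𝒰, ENNReal.ofReal (diam (U : Set X) ^ s) ≤ ENNReal.ofReal ε}

/-- `C^d({a_n})`: the union over `n` of the spheres in `ℝ^d` of radius `a n` centred at
the origin. -/
noncomputable def concentricSeq (d : ℕ) (a : ℕ → ℝ) : Set (EuclideanSpace ℝ (Fin d)) :=
  {x | ∃ n : ℕ, ‖x‖ = a n}

/-!
Replace each set `U` of a cover of `F ⊆ [0, R]` (here `F = {a_n}`), of diameter `t ∈ [δ, δ ^ θ]`,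
by the grid cubes of diameter `t` that meet `{x | ‖x‖ ∈ U}`. These cubes lie in a spherical shell of
width `4 t` and radius at most `R + 2`, so comparing volumes shows that there are `O(t ^ (1 - d))`
of them, and together they contribute `O(t ^ s)` to the `(d - 1 + s)`-sum, just as `U`
contributed `t ^ s` to the `s`-sum. Thus, scale by scale, every admissible exponent `s` of `F`
yields the admissible exponent `d - 1 + s` of the union of spheres, for the upper and the lower
dimension alike. The exponent `2` is admissible for every bounded `F`, so neither infimum is
over an empty set.
-/

open MeasureTheory Topology

section Cubes

variable {d : ℕ}

def cube (ℓ : ℝ) (k : Fin d → ℤ) : Set (EuclideanSpace ℝ (Fin d)) :=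
  {x | ∀ i, x i ∈ Icc (k i * ℓ) (k i * ℓ + ℓ)}

def cubeIco (ℓ : ℝ) (k : Fin d → ℤ) : Set (EuclideanSpace ℝ (Fin d)) :=
  {x | ∀ i, x i ∈ Ico (k i * ℓ) (k i * ℓ + ℓ)}

lemma cubeIco_subset_cube (ℓ : ℝ) (k : Fin d → ℤ) : cubeIco ℓ k ⊆ cube ℓ k :=
  fun _ hx i => Ico_subset_Icc_self (hx i)

lemma mem_cubeIco_iff {ℓ : ℝ} (hℓ : 0 < ℓ) {x : EuclideanSpace ℝ (Fin d)} {k : Fin d → ℤ} :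
    x ∈ cubeIco ℓ k ↔ (fun i => ⌊x i / ℓ⌋) = k := by
  simp only [cubeIco, mem_ofPred_eq, mem_Ico, funext_iff, Int.floor_eq_iff, le_div_iff₀ hℓ,
    div_lt_iff₀ hℓ, add_mul, one_mul]

lemma mem_cube_floor {ℓ : ℝ} (hℓ : 0 < ℓ) (x : EuclideanSpace ℝ (Fin d)) :
    x ∈ cube ℓ (fun i => ⌊x i / ℓ⌋) :=
  cubeIco_subset_cube ℓ _ ((mem_cubeIco_iff hℓ).2 rfl)

lemma pairwise_disjoint_cubeIco {ℓ : ℝ} (hℓ : 0 < ℓ) :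
    Pairwise (Function.onFun Disjoint fun k : Fin d → ℤ => cubeIco ℓ k) := by
  intro k k' hkk'
  refine Set.disjoint_left.2 fun x hx hx' => hkk' ?_
  rw [← (mem_cubeIco_iff hℓ).1 hx, ← (mem_cubeIco_iff hℓ).1 hx']

lemma cubeIco_eq_preimage (ℓ : ℝ) (k : Fin d → ℤ) :
    cubeIco ℓ k = (MeasurableEquiv.toLp 2 (Fin d → ℝ)).symm ⁻¹'
      univ.pi fun i => Ico (k i * ℓ) (k i * ℓ + ℓ) := by
  ext x
  simp [cubeIco]

lemma measurableSet_cubeIco (ℓ : ℝ) (k : Fin d → ℤ) : MeasurableSet (cubeIco ℓ k) := by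
  rw [cubeIco_eq_preimage]
  exact (MeasurableEquiv.toLp 2 (Fin d → ℝ)).symm.measurable
    (MeasurableSet.univ_pi fun _ => measurableSet_Ico)

lemma volume_cubeIco (ℓ : ℝ) (k : Fin d → ℤ) :
    volume (cubeIco ℓ k) = ENNReal.ofReal ℓ ^ d := by
  rw [cubeIco_eq_preimage,
    (EuclideanSpace.volume_preserving_symm_measurableEquiv_toLp (Fin d)).measure_preimage
      (MeasurableSet.univ_pi fun _ => measurableSet_Ico).nullMeasurableSet,
    volume_pi_pi]
  simp

lemma dist_le_mul_sqrt_of_forall_dist_le {x y : EuclideanSpace ℝ (Fin d)} {ℓ : ℝ} (hℓ : 0 ≤ ℓ)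
    (h : ∀ i, dist (x i) (y i) ≤ ℓ) : dist x y ≤ ℓ * √d := by
  rw [EuclideanSpace.dist_eq, ← Real.sqrt_sq hℓ, ← Real.sqrt_mul (sq_nonneg ℓ), mul_comm]
  gcongr
  calc ∑ i, dist (x i) (y i) ^ 2 ≤ ∑ _i : Fin d, ℓ ^ 2 := by gcongr with i; exact h i
    _ = d * ℓ ^ 2 := by simp

lemma dist_le_of_mem_cube {ℓ : ℝ} (hℓ : 0 ≤ ℓ) {k : Fin d → ℤ} {x y : EuclideanSpace ℝ (Fin d)}
    (hx : x ∈ cube ℓ k) (hy : y ∈ cube ℓ k) : dist x y ≤ ℓ * √d :=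
  dist_le_mul_sqrt_of_forall_dist_le hℓ fun i => by
    simpa using Real.dist_le_of_mem_Icc (hx i) (hy i)

lemma diam_cube {ℓ : ℝ} (hℓ : 0 ≤ ℓ) (k : Fin d → ℤ) : diam (cube ℓ k) = ℓ * √d := by
  have hdist : ∀ x ∈ cube ℓ k, ∀ y ∈ cube ℓ k, dist x y ≤ ℓ * √d :=
    fun _ hx _ hy => dist_le_of_mem_cube hℓ hx hy
  refine le_antisymm (diam_le_of_forall_dist_le (by positivity) hdist) ?_
  let p : EuclideanSpace ℝ (Fin d) := WithLp.toLp 2 fun i => k i * ℓ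
  have hp : p ∈ cube ℓ k := fun i => ⟨le_rfl, by simp [p, hℓ]⟩
  have hq : p + WithLp.toLp 2 (fun _ => ℓ) ∈ cube ℓ k := fun i => ⟨by simp [p, hℓ], by simp [p]⟩
  calc ℓ * √d = dist p (p + WithLp.toLp 2 fun _ => ℓ) := by
        rw [dist_self_add_right, EuclideanSpace.norm_eq]
        simp [Real.sqrt_sq hℓ, mul_comm]
    _ ≤ diam (cube ℓ k) := dist_le_diam_of_mem (isBounded_iff.2 ⟨_, hdist⟩) hp hq

lemma tsum_ofReal_pow_le_volume {ℓ : ℝ} (hℓ : 0 < ℓ) {K : Set (Fin d → ℤ)}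
    {T : Set (EuclideanSpace ℝ (Fin d))} (hT : ∀ k ∈ K, cube ℓ k ⊆ T) :
    ∑' _k : K, ENNReal.ofReal ℓ ^ d ≤ volume T := by
  have hdisj : Pairwise (Function.onFun Disjoint fun k : K => cubeIco ℓ k.1) :=
    fun k k' hkk' => pairwise_disjoint_cubeIco hℓ (Subtype.coe_ne_coe.2 hkk')
  calc ∑' _k : K, ENNReal.ofReal ℓ ^ d = ∑' k : K, volume (cubeIco ℓ k.1) :=
        tsum_congr fun k => (volume_cubeIco ℓ k.1).symm
    _ = volume (⋃ k : K, cubeIco ℓ k.1) :=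
        (measure_iUnion hdisj fun k => measurableSet_cubeIco ℓ k.1).symm
    _ ≤ volume T := measure_mono <| iUnion_subset fun k =>
        (cubeIco_subset_cube ℓ k.1).trans (hT k.1 k.2)

end Cubes

lemma ENNReal.tsum_image_le {α β : Type*} (f : α → β) (s : Set α) (g : β → ENNReal) :
    ∑' y : f '' s, g y ≤ ∑' x : s, g (f x) :=
  ENNReal.tsum_le_tsum_comp_of_surjective imageFactorization_surjective fun y : f '' s => g y

open Module in
lemma addHaar_norm_preimage_closedBall_le {E : Type*} [NormedAddCommGroup E] [NormedSpace ℝ E]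
    [MeasurableSpace E] [BorelSpace E] [FiniteDimensional ℝ E] [Nontrivial E]
    (μ : Measure E) [μ.IsAddHaarMeasure] {r t : ℝ} (hr : 0 ≤ r) (ht : 0 ≤ t) :
    μ (norm ⁻¹' closedBall r t) ≤
      ENNReal.ofReal (finrank ℝ E * (r + t) ^ (finrank ℝ E - 1) * (2 * t)) * μ (ball 0 1) := by
  set n := finrank ℝ E
  set c := max (r - t) 0
  have hc : 0 ≤ c := le_max_right _ _
  have hcb : c ≤ r + t := max_le (by linarith) (by linarith)
  have hsub : norm ⁻¹' closedBall r t ⊆ closedBall (0 : E) (r + t) \ ball 0 c := by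
    intro x hx
    have hx' := abs_sub_le_iff.1 (Real.dist_eq _ _ ▸ mem_closedBall.1 hx)
    simp only [Set.mem_sdiff, mem_closedBall_zero_iff, mem_ball_zero_iff, not_lt]
    exact ⟨by linarith, max_le (by linarith) (norm_nonneg x)⟩
  have hpow : (r + t) ^ n - c ^ n ≤ n * (r + t) ^ (n - 1) * (2 * t) := by
    have h := (le_abs_self _).trans (abs_pow_sub_pow_le (r + t) c n)
    rw [abs_of_nonneg (by linarith), abs_of_nonneg (by linarith), abs_of_nonneg hc,
      max_eq_left hcb] at h
    have h2t : r + t - c ≤ 2 * t := by linarith [le_max_left (r - t) 0]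
    calc (r + t) ^ n - c ^ n ≤ (r + t - c) * n * (r + t) ^ (n - 1) := h
      _ ≤ 2 * t * n * (r + t) ^ (n - 1) := by gcongr
      _ = n * (r + t) ^ (n - 1) * (2 * t) := by ring
  calc μ (norm ⁻¹' closedBall r t) ≤ μ (closedBall 0 (r + t) \ ball 0 c) := measure_mono hsub
    _ = μ (closedBall 0 (r + t)) - μ (ball 0 c) :=
        measure_sdiff (ball_subset_closedBall.trans (closedBall_subset_closedBall hcb))
          measurableSet_ball.nullMeasurableSet measure_ball_lt_top.ne
    _ = ENNReal.ofReal ((r + t) ^ n - c ^ n) * μ (ball 0 1) := by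
        rw [Measure.addHaar_closedBall μ _ (hc.trans hcb), Measure.addHaar_ball μ _ hc,
          ← ENNReal.sub_mul fun _ _ => measure_ball_lt_top.ne, ENNReal.ofReal_sub _ (by positivity)]
    _ ≤ _ := by gcongr

section NormPreimageCubes

variable {d : ℕ}

-- The side `diam U / √d` makes every cube have diameter exactly `diam U`.
def normPreimageCubes (d : ℕ) (U : Set ℝ) : Set (Set (EuclideanSpace ℝ (Fin d))) :=
  cube (diam U / √d) '' {k | (cube (diam U / √d) k ∩ norm ⁻¹' U).Nonempty}

lemma norm_preimage_subset_sUnion_normPreimageCubes (hd : 1 ≤ d) {U : Set ℝ} (hU : 0 < diam U) :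
    norm ⁻¹' U ⊆ ⋃₀ normPreimageCubes d U := by
  intro x hx
  have hx' := mem_cube_floor (show 0 < diam U / √d by positivity) x
  exact ⟨_, mem_image_of_mem _ ⟨x, hx', hx⟩, hx'⟩

lemma diam_of_mem_normPreimageCubes (hd : 1 ≤ d) {U : Set ℝ}
    {V : Set (EuclideanSpace ℝ (Fin d))} (hV : V ∈ normPreimageCubes d U) : diam V = diam U := by
  obtain ⟨k, -, rfl⟩ := hV
  rw [diam_cube (by positivity), div_mul_cancel₀ _ (by positivity)]

lemma subset_norm_preimage_closedBall_of_mem_normPreimageCubes (hd : 1 ≤ d) {U : Set ℝ}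
    (hU : 0 < diam U) {u : ℝ} (hu : u ∈ U) {V : Set (EuclideanSpace ℝ (Fin d))}
    (hV : V ∈ normPreimageCubes d U) : V ⊆ norm ⁻¹' closedBall u (2 * diam U) := by
  obtain ⟨k, ⟨y, hyk, hyU⟩, rfl⟩ := hV
  intro x hxk
  have hUb : Bornology.IsBounded U := by
    by_contra h
    exact hU.ne' (diam_eq_zero_of_unbounded h)
  have hxy : dist x y ≤ diam U := by
    simpa [div_mul_cancel₀ _ (show √(d : ℝ) ≠ 0 by positivity)] using
      dist_le_of_mem_cube (by positivity) hxk hyk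
  calc dist ‖x‖ u ≤ dist ‖x‖ ‖y‖ + dist ‖y‖ u := dist_triangle _ _ _
    _ ≤ dist x y + diam U := by
      gcongr
      · simpa [dist_eq_norm] using dist_norm_norm_le x y
      · exact dist_le_diam_of_mem hUb hyU hu
    _ ≤ 2 * diam U := by linarith

lemma tsum_normPreimageCubes_le (hd : 1 ≤ d) {U : Set ℝ} (hU : 0 < diam U) (hU1 : diam U ≤ 1)
    {u R : ℝ} (hu : u ∈ U) (hu0 : 0 ≤ u) (huR : u ≤ R) (s : ℝ) :
    ∑' V : normPreimageCubes d U,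
        ENNReal.ofReal (diam (V : Set (EuclideanSpace ℝ (Fin d))) ^ ((d : ℝ) - 1 + s)) ≤
      ENNReal.ofReal (√d ^ d * (d * (R + 2) ^ (d - 1) * 4) *
          (volume (ball (0 : EuclideanSpace ℝ (Fin d)) 1)).toReal) *
        ENNReal.ofReal (diam U ^ s) := by
  have : Nonempty (Fin d) := ⟨⟨0, hd⟩⟩
  set t := diam U
  set ℓ := t / √d
  have hsd : 0 < √(d : ℝ) := by positivity
  have hℓ : 0 < ℓ := by positivity
  set K : Set (Fin d → ℤ) := {k | (cube ℓ k ∩ norm ⁻¹' U).Nonempty}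
  have hterm : t ^ ((d : ℝ) - 1 + s) = √d ^ d * t ^ (s - 1) * ℓ ^ d := by
    rw [show (d : ℝ) - 1 + s = s - 1 + d by ring, Real.rpow_add_natCast hU.ne', div_pow]
    field_simp
  have ht : t ^ (s - 1) * t = t ^ s := by
    rw [Real.rpow_sub_one hU.ne', div_mul_cancel₀ _ hU.ne']
  calc ∑' V : normPreimageCubes d U,
        ENNReal.ofReal (diam (V : Set (EuclideanSpace ℝ (Fin d))) ^ ((d : ℝ) - 1 + s))
      ≤ ∑' k : K, ENNReal.ofReal (diam (cube ℓ k.1) ^ ((d : ℝ) - 1 + s)) :=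
        ENNReal.tsum_image_le (cube ℓ) K fun V => ENNReal.ofReal (diam V ^ ((d : ℝ) - 1 + s))
    _ = ∑' _k : K, ENNReal.ofReal (√d ^ d * t ^ (s - 1)) * ENNReal.ofReal ℓ ^ d := by
        refine tsum_congr fun k => ?_
        rw [diam_cube hℓ.le, div_mul_cancel₀ _ hsd.ne', hterm, ← ENNReal.ofReal_pow hℓ.le,
          ENNReal.ofReal_mul (by positivity)]
    _ = ENNReal.ofReal (√d ^ d * t ^ (s - 1)) * ∑' _k : K, ENNReal.ofReal ℓ ^ d :=
        ENNReal.tsum_mul_left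
    _ ≤ ENNReal.ofReal (√d ^ d * t ^ (s - 1)) * volume (norm ⁻¹' closedBall u (2 * t)) := by
        gcongr
        exact tsum_ofReal_pow_le_volume hℓ fun k hk =>
          subset_norm_preimage_closedBall_of_mem_normPreimageCubes hd hU hu (mem_image_of_mem _ hk)
    _ ≤ ENNReal.ofReal (√d ^ d * t ^ (s - 1)) *
          (ENNReal.ofReal (d * (u + 2 * t) ^ (d - 1) * (2 * (2 * t))) *
            volume (ball (0 : EuclideanSpace ℝ (Fin d)) 1)) := by
        gcongr
        have h := addHaar_norm_preimage_closedBall_le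
          (volume : Measure (EuclideanSpace ℝ (Fin d))) hu0 (by positivity : 0 ≤ 2 * t)
        rwa [finrank_euclideanSpace_fin] at h
    _ = ENNReal.ofReal (√d ^ d * (d * (u + 2 * t) ^ (d - 1) * 4) * t ^ s) *
          volume (ball (0 : EuclideanSpace ℝ (Fin d)) 1) := by
        rw [← mul_assoc, ← ENNReal.ofReal_mul (by positivity), ← ht]
        ring_nf
    _ ≤ ENNReal.ofReal (√d ^ d * (d * (R + 2) ^ (d - 1) * 4) * t ^ s) *
          volume (ball (0 : EuclideanSpace ℝ (Fin d)) 1) := by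
        gcongr
        linarith
    _ = _ := by
        have hR : 0 ≤ R := hu0.trans huR
        rw [ENNReal.ofReal_mul (p := √d ^ d * (d * (R + 2) ^ (d - 1) * 4)) (by positivity),
          ENNReal.ofReal_mul (p := √d ^ d * (d * (R + 2) ^ (d - 1) * 4)) (by positivity),
          ENNReal.ofReal_toReal measure_ball_lt_top.ne]
        ring

end NormPreimageCubes

section IntermediateCovers

variable {X Y : Type*} [PseudoMetricSpace X] [PseudoMetricSpace Y]

def HasIntermediateCover (θ s δ ε : ℝ) (E : Set X) : Prop :=
  ∃ 𝒰 : Set (Set X), 𝒰.Countable ∧ E ⊆ ⋃₀ 𝒰 ∧ (∀ U ∈ 𝒰, δ ≤ diam U ∧ diam U ≤ δ ^ θ) ∧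
    ∑' U : 𝒰, ENNReal.ofReal (diam (U : Set X) ^ s) ≤ ENNReal.ofReal ε

lemma HasIntermediateCover.mono {θ s δ ε : ℝ} {E F : Set X} (hEF : E ⊆ F)
    (h : HasIntermediateCover θ s δ ε F) : HasIntermediateCover θ s δ ε E :=
  let ⟨𝒰, h𝒰, hcov, hdiam, hsum⟩ := h
  ⟨𝒰, h𝒰, hEF.trans hcov, hdiam, hsum⟩

def IsUpperExponent (θ : ℝ) (E : Set X) (s : ℝ) : Prop :=
  0 ≤ s ∧ ∀ ε, 0 < ε → ∀ᶠ δ in 𝓝[>] 0, HasIntermediateCover θ s δ ε E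

def IsLowerExponent (θ : ℝ) (E : Set X) (s : ℝ) : Prop :=
  0 ≤ s ∧ ∀ ε, 0 < ε → ∃ᶠ δ in 𝓝[>] 0, HasIntermediateCover θ s δ ε E

lemma IsUpperExponent.isLowerExponent {θ s : ℝ} {E : Set X} (h : IsUpperExponent θ E s) :
    IsLowerExponent θ E s :=
  ⟨h.1, fun ε hε => (h.2 ε hε).frequently⟩

lemma updim_eq_sInf (θ : ℝ) (E : Set X) : updim θ E = sInf {s | IsUpperExponent θ E s} := by
  simp only [updim, IsUpperExponent, (nhdsGT_basis (0 : ℝ)).eventually_iff, mem_Ioo, and_imp,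
    HasIntermediateCover]

lemma lodim_eq_sInf (θ : ℝ) (E : Set X) : lodim θ E = sInf {s | IsLowerExponent θ E s} := by
  simp only [lodim, IsLowerExponent, (nhdsGT_basis (0 : ℝ)).frequently_iff, mem_Ioo, and_assoc,
    HasIntermediateCover]

def CoverTransfer (θ c : ℝ) (F : Set Y) (E : Set X) : Prop :=
  ∀ s, ∃ C, 0 < C ∧ ∀ δ ε, 0 < δ → δ ≤ 1 →
    HasIntermediateCover θ s δ ε F → HasIntermediateCover θ (c + s) δ (C * ε) E

lemma CoverTransfer.exists_eventually_imp {θ c : ℝ} {F : Set Y} {E : Set X}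
    (h : CoverTransfer θ c F E) (s : ℝ) {ε : ℝ} (hε : 0 < ε) :
    ∃ ε', 0 < ε' ∧ ∀ᶠ δ in 𝓝[>] 0,
      HasIntermediateCover θ s δ ε' F → HasIntermediateCover θ (c + s) δ ε E := by
  obtain ⟨C, hC, hCE⟩ := h s
  refine ⟨ε / C, div_pos hε hC, ?_⟩
  filter_upwards [Ioc_mem_nhdsGT one_pos] with δ hδ hF
  simpa [mul_div_cancel₀ _ hC.ne'] using hCE δ _ hδ.1 hδ.2 hF

lemma csInf_le_add_csInf {A B : Set ℝ} {c : ℝ} (hA : BddBelow A) (hB : B.Nonempty)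
    (h : ∀ s ∈ B, c + s ∈ A) : sInf A ≤ c + sInf B := by
  have : sInf A - c ≤ sInf B := le_csInf hB fun s hs => by linarith [csInf_le hA (h s hs)]
  linarith

lemma CoverTransfer.updim_le {θ c : ℝ} {F : Set Y} {E : Set X} (h : CoverTransfer θ c F E)
    (hc : 0 ≤ c) (hF : ∃ s, IsUpperExponent θ F s) : updim θ E ≤ c + updim θ F := by
  rw [updim_eq_sInf, updim_eq_sInf]
  refine csInf_le_add_csInf ⟨0, fun _ hs => hs.1⟩ hF fun s ⟨hs, hsF⟩ =>
    ⟨add_nonneg hc hs, fun ε hε => ?_⟩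
  obtain ⟨ε', hε', himp⟩ := h.exists_eventually_imp s hε
  exact (hsF ε' hε').mp himp

lemma CoverTransfer.lodim_le {θ c : ℝ} {F : Set Y} {E : Set X} (h : CoverTransfer θ c F E)
    (hc : 0 ≤ c) (hF : ∃ s, IsUpperExponent θ F s) : lodim θ E ≤ c + lodim θ F := by
  rw [lodim_eq_sInf, lodim_eq_sInf]
  refine csInf_le_add_csInf ⟨0, fun _ hs => hs.1⟩ (hF.imp fun _ hs => hs.isLowerExponent)
    fun s ⟨hs, hsF⟩ => ⟨add_nonneg hc hs, fun ε hε => ?_⟩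
  obtain ⟨ε', hε', himp⟩ := h.exists_eventually_imp s hε
  exact (hsF ε' hε').mp himp

end IntermediateCovers

lemma hasIntermediateCover_Icc {R θ δ ε : ℝ} (hR : 0 ≤ R) (hθ1 : θ ≤ 1) (hδ : 0 < δ)
    (hδ1 : δ ≤ 1) (hε : (R + 1) * δ ≤ ε) : HasIntermediateCover θ 2 δ ε (Icc 0 R) := by
  set N := ⌊R / δ⌋₊ + 1
  set I : ℕ → Set ℝ := fun j => Icc (j * δ) (j * δ + δ)
  have hdiam : ∀ j, diam (I j) = δ := fun j => by
    rw [Real.diam_Icc (by linarith), add_sub_cancel_left]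
  refine ⟨I '' ↑(Finset.range N), (Finset.countable_toSet _).image _, ?_, ?_, ?_⟩
  · intro x hx
    have hxδ : 0 ≤ x / δ := div_nonneg hx.1 hδ.le
    have hj : ⌊x / δ⌋₊ ∈ Finset.range N := Finset.mem_range.2 <|
      Nat.lt_succ_of_le (Nat.floor_le_floor (div_le_div_of_nonneg_right hx.2 hδ.le))
    refine ⟨I ⌊x / δ⌋₊, mem_image_of_mem _ hj, (le_div_iff₀ hδ).1 (Nat.floor_le hxδ), ?_⟩
    have := (div_lt_iff₀ hδ).1 (Nat.lt_floor_add_one (x / δ))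
    linarith
  · rintro _ ⟨j, -, rfl⟩
    rw [hdiam]
    exact ⟨le_rfl, by simpa using Real.rpow_le_rpow_of_exponent_ge hδ hδ1 hθ1⟩
  · have hN : (N : ℝ) * δ ^ 2 ≤ ε := by
      have hfloor := Nat.floor_le (div_nonneg hR hδ.le)
      have hNδ : (N : ℝ) * δ ≤ R + δ := by
        calc (N : ℝ) * δ ≤ (R / δ + 1) * δ := by gcongr; push_cast [N]; linarith
          _ = R + δ := by field_simp
      nlinarith
    calc ∑' U : I '' ↑(Finset.range N), ENNReal.ofReal (diam (U : Set ℝ) ^ (2 : ℝ))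
        ≤ ∑' j : ↑(Finset.range N : Set ℕ), ENNReal.ofReal (diam (I j) ^ (2 : ℝ)) :=
          ENNReal.tsum_image_le I _ fun U => ENNReal.ofReal (diam U ^ (2 : ℝ))
      _ = ∑ _j ∈ Finset.range N, ENNReal.ofReal (δ ^ 2) := by
          simp only [hdiam, Real.rpow_two]
          exact Finset.tsum_subtype (Finset.range N) fun _ => ENNReal.ofReal (δ ^ 2)
      _ ≤ ENNReal.ofReal ε := by
          rw [Finset.sum_const, Finset.card_range, nsmul_eq_mul, ← ENNReal.ofReal_natCast,
            ← ENNReal.ofReal_mul (by positivity)]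
          exact ENNReal.ofReal_le_ofReal hN

lemma isUpperExponent_two {F : Set ℝ} {R θ : ℝ} (hR : 0 ≤ R) (hF : F ⊆ Icc 0 R) (hθ1 : θ ≤ 1) :
    IsUpperExponent θ F 2 := by
  refine ⟨zero_le_two, fun ε hε => ?_⟩
  filter_upwards [Ioc_mem_nhdsGT (show 0 < min 1 (ε / (R + 1)) by positivity)] with δ hδ
  have hδε : (R + 1) * δ ≤ ε := by
    rw [← le_div_iff₀' (by positivity)]
    exact hδ.2.trans (min_le_right _ _)
  exact (hasIntermediateCover_Icc hR hθ1 hδ.1 (hδ.2.trans (min_le_left _ _)) hδε).mono hF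

section NormPreimage

variable {d : ℕ}

lemma coverTransfer_norm_preimage (hd : 1 ≤ d) {θ R : ℝ} (hθ : 0 < θ) (hR : 0 ≤ R) {F : Set ℝ}
    (hF : F ⊆ Icc 0 R) :
    CoverTransfer θ ((d : ℝ) - 1) F (norm ⁻¹' F : Set (EuclideanSpace ℝ (Fin d))) := by
  intro s
  have : Nonempty (Fin d) := ⟨⟨0, hd⟩⟩
  set B := volume (ball (0 : EuclideanSpace ℝ (Fin d)) 1)
  have hB : 0 < B.toReal :=
    ENNReal.toReal_pos (measure_ball_pos _ _ one_pos).ne' measure_ball_lt_top.ne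
  set C := √d ^ d * (d * (R + 2) ^ (d - 1) * 4) * B.toReal
  refine ⟨C, by positivity, ?_⟩
  rintro δ ε hδ hδ1 ⟨𝒰, h𝒰, hcov, hdiam, hsum⟩
  have hpos : ∀ U ∈ 𝒰, 0 < diam U := fun U hU => hδ.trans_le (hdiam U hU).1
  set 𝒰' := {U ∈ 𝒰 | (U ∩ F).Nonempty}
  refine ⟨⋃ U ∈ 𝒰', normPreimageCubes d U,
    (h𝒰.mono (sep_subset _ _)).biUnion fun U _ => (to_countable _).image _, ?_, ?_, ?_⟩
  · intro x hx
    obtain ⟨U, hU, hxU⟩ := hcov hx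
    obtain ⟨V, hV, hxV⟩ := norm_preimage_subset_sUnion_normPreimageCubes hd (hpos U hU) hxU
    exact ⟨V, mem_biUnion ⟨hU, _, hxU, hx⟩ hV, hxV⟩
  · intro V hV
    obtain ⟨U, hU, hV⟩ := mem_iUnion₂.1 hV
    rw [diam_of_mem_normPreimageCubes hd hV]
    exact hdiam U hU.1
  · have hU : ∀ U : 𝒰', ∑' V : normPreimageCubes d U,
        ENNReal.ofReal (diam (V : Set (EuclideanSpace ℝ (Fin d))) ^ ((d : ℝ) - 1 + s)) ≤
          ENNReal.ofReal C * ENNReal.ofReal (diam (U : Set ℝ) ^ s) := by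
      rintro ⟨U, hU, hUF⟩
      obtain ⟨u, huU, huF⟩ := hUF
      have hle1 : diam U ≤ 1 := (hdiam U hU).2.trans (Real.rpow_le_one hδ.le hδ1 hθ.le)
      exact tsum_normPreimageCubes_le hd (hpos U hU) hle1 huU (hF huF).1 (hF huF).2 s
    calc _ ≤ ∑' U : 𝒰', ∑' V : normPreimageCubes d U,
          ENNReal.ofReal (diam (V : Set (EuclideanSpace ℝ (Fin d))) ^ ((d : ℝ) - 1 + s)) :=
          ENNReal.tsum_biUnion_le_tsum
            (fun V => ENNReal.ofReal (diam V ^ ((d : ℝ) - 1 + s))) 𝒰' (normPreimageCubes d)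
      _ ≤ ∑' U : 𝒰', ENNReal.ofReal C * ENNReal.ofReal (diam (U : Set ℝ) ^ s) :=
          ENNReal.tsum_le_tsum hU
      _ ≤ ENNReal.ofReal C * ∑' U : 𝒰, ENNReal.ofReal (diam (U : Set ℝ) ^ s) := by
          rw [ENNReal.tsum_mul_left]
          exact mul_le_mul_right
            (ENNReal.tsum_mono_subtype (fun U => ENNReal.ofReal (diam U ^ s)) (sep_subset _ _)) _
      _ ≤ ENNReal.ofReal (C * ε) := by
          rw [ENNReal.ofReal_mul (p := C) (by positivity)]
          exact mul_le_mul_right hsum _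

theorem updim_norm_preimage_le (hd : 1 ≤ d) {θ R : ℝ} (hθ : 0 < θ) (hθ1 : θ ≤ 1) (hR : 0 ≤ R)
    {F : Set ℝ} (hF : F ⊆ Icc 0 R) :
    updim θ (norm ⁻¹' F : Set (EuclideanSpace ℝ (Fin d))) ≤ (d : ℝ) - 1 + updim θ F :=
  (coverTransfer_norm_preimage hd hθ hR hF).updim_le (by simpa using hd)
    ⟨2, isUpperExponent_two hR hF hθ1⟩

theorem lodim_norm_preimage_le (hd : 1 ≤ d) {θ R : ℝ} (hθ : 0 < θ) (hθ1 : θ ≤ 1) (hR : 0 ≤ R)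
    {F : Set ℝ} (hF : F ⊆ Icc 0 R) :
    lodim θ (norm ⁻¹' F : Set (EuclideanSpace ℝ (Fin d))) ≤ (d : ℝ) - 1 + lodim θ F :=
  (coverTransfer_norm_preimage hd hθ hR hF).lodim_le (by simpa using hd)
    ⟨2, isUpperExponent_two hR hF hθ1⟩

end NormPreimage

theorem stmt7_general (d : ℕ) (hd : 2 ≤ d) (a : ℕ → ℝ)
    (ha : StrictAnti a) (hapos : ∀ n, 0 < a n)
    (θ : ℝ) (hθ : 0 < θ) (hθ' : θ ≤ 1) :
    updim θ (concentricSeq d a) ≤ (d : ℝ) - 1 + updim θ (Set.range a) ∧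
      lodim θ (concentricSeq d a) ≤ (d : ℝ) - 1 + lodim θ (Set.range a) := by
  have hrange : range a ⊆ Icc 0 (a 0) :=
    range_subset_iff.2 fun n => ⟨(hapos n).le, ha.antitone n.zero_le⟩
  have hC : concentricSeq d a = norm ⁻¹' range a := by
    ext x
    simp [concentricSeq, eq_comm]
  rw [hC]
  exact ⟨updim_norm_preimage_le (by omega) hθ hθ' (hapos 0).le hrange,
    lodim_norm_preimage_le (by omega) hθ hθ' (hapos 0).le hrange⟩

theorem stmt7 (d : ℕ) (hd : 2 ≤ d) (a : ℕ → ℝ)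
    (ha : StrictAnti a) (hapos : ∀ n, 0 < a n) (halim : Tendsto a atTop (nhds 0))
    (θ : ℝ) (hθ : 0 < θ) (hθ' : θ ≤ 1) :
    updim θ (concentricSeq d a) ≤ (d : ℝ) - 1 + updim θ (Set.range a) ∧
      lodim θ (concentricSeq d a) ≤ (d : ℝ) - 1 + lodim θ (Set.range a) :=
  stmt7_general d hd a ha hapos θ hθ hθ'
end

section
/- Let d ≥ 2 be an integer, p > 0, and let E ⊆ C_p^d be a set such that for each i ∈ ℕ the intersection of E with the sphere of radius i^{-p} centred at the origin is a finite set of cardinality b_i. If l > 0 satisfies limsup_{n→∞} log(Σ_{i=1}^{n} b_i)/log(n) < l, then for all θ ∈ (0,1], updim_θ(E) ≤ θ·l·d/(p·d + θ·l). In particular, if limsup_{n→∞} log(Σ_{i=1}^{n} b_i)/log(n) < ∞, then updim_θ(E) → 0 as θ → 0⁺, so the intermediate dimensions of E are continuous at zero. -/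
/-!
Given `t` above the claimed bound, choose `γ > 0` with `γ l < t`, `γ p < θ` and
`θ (d - t) < γ p d`. At scale `δ` put `M = ⌈δ^(-γ)⌉`. The at most `∑_{i ≤ M} b_i ≤ M^l ≲ δ^(-γ l)`
points of `E` on the spheres of radius `i^(-p)`, `i ≤ M`, are covered by sets of diameter `δ`,
costing `≲ δ^(t - γ l)`; the rest of `E` lies in the ball of radius `M^(-p) ≤ δ^(γ p)`, which
`≲ δ^((γ p - θ) d)` grid cubes of diameter `δ^θ` cover, costing `≲ δ^((γ p - θ) d + θ t)`. Both
exponents are positive, so these covers witness `updim θ E ≤ t`.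
-/

open Set Metric Filter

/-- `C_p^d`: the union over `n ≥ 1` of the spheres in `ℝ^d` of radius `n^{-p}` centred at
the origin. -/
noncomputable def concentric (d : ℕ) (p : ℝ) : Set (EuclideanSpace ℝ (Fin d)) :=
  {x | ∃ n : ℕ, 1 ≤ n ∧ ‖x‖ = (n : ℝ) ^ (-p)}

open scoped ENNReal Topology

noncomputable def coverSum {X : Type*} [PseudoMetricSpace X] (s : ℝ) (𝒰 : Set (Set X)) : ℝ≥0∞ :=
  ∑' U : 𝒰, ENNReal.ofReal (diam (U : Set X) ^ s)

section Updim

variable {X : Type*} [PseudoMetricSpace X]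

theorem updim_nonneg (θ : ℝ) (E : Set X) : 0 ≤ updim θ E :=
  Real.sInf_nonneg fun _ hs => hs.1

theorem updim_le_of_eventually_coverSum_le {θ t : ℝ} {E : Set X} {c : ℝ → ℝ} (ht : 0 ≤ t)
    (hc : Tendsto c (𝓝[>] 0) (𝓝 0))
    (hcover : ∀ᶠ δ in 𝓝[>] 0, ∃ 𝒰 : Set (Set X), 𝒰.Countable ∧ E ⊆ ⋃₀ 𝒰 ∧
      (∀ U ∈ 𝒰, δ ≤ diam U ∧ diam U ≤ δ ^ θ) ∧ coverSum t 𝒰 ≤ ENNReal.ofReal (c δ)) :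
    updim θ E ≤ t := by
  refine csInf_le ⟨0, fun _ hs => hs.1⟩ ⟨ht, fun ε hε => ?_⟩
  obtain ⟨δ₀, hδ₀, hsub⟩ := mem_nhdsGT_iff_exists_Ioo_subset.mp
    (hcover.and (hc.eventually (ge_mem_nhds hε)))
  refine ⟨δ₀, hδ₀, fun δ hδ hδδ₀ => ?_⟩
  obtain ⟨⟨𝒰, h𝒰, hE, hdiam, hsum⟩, hcε⟩ := hsub ⟨hδ, hδδ₀⟩
  exact ⟨𝒰, h𝒰, hE, hdiam, hsum.trans (ENNReal.ofReal_le_ofReal hcε)⟩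

theorem coverSum_union_le (s : ℝ) (𝒰 𝒱 : Set (Set X)) :
    coverSum s (𝒰 ∪ 𝒱) ≤ coverSum s 𝒰 + coverSum s 𝒱 :=
  ENNReal.tsum_union_le (fun U => ENNReal.ofReal (diam U ^ s)) 𝒰 𝒱

theorem coverSum_eq_of_diam_eq {s ρ : ℝ} {𝒰 : Set (Set X)} (h𝒰 : 𝒰.Finite)
    (hdiam : ∀ U ∈ 𝒰, diam U = ρ) : coverSum s 𝒰 = ENNReal.ofReal (𝒰.ncard * ρ ^ s) := by
  rw [coverSum, tsum_congr fun U : 𝒰 => by rw [hdiam U U.2], ENNReal.tsum_set_const,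
    ← h𝒰.cast_ncard_eq, ENNReal.ofReal_mul (Nat.cast_nonneg _), ENNReal.ofReal_natCast]
  rfl

theorem tendsto_updim_nhdsGT_zero {E : Set X} {f : ℝ → ℝ}
    (hf : Tendsto f (𝓝[>] 0) (𝓝 0)) (hle : ∀ᶠ θ in 𝓝[>] 0, updim θ E ≤ f θ) :
    Tendsto (fun θ => updim θ E) (𝓝[>] 0) (𝓝 0) :=
  tendsto_of_tendsto_of_tendsto_of_le_of_le' tendsto_const_nhds hf
    (.of_forall fun θ => updim_nonneg θ E) hle

end Updim

theorem exists_finite_cover_diam_eq {V : Type*} [NormedAddCommGroup V] [NormedSpace ℝ V]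
    [Nontrivial V] {S : Set V} (hS : S.Finite) {δ : ℝ} (hδ : 0 ≤ δ) :
    ∃ 𝒰 : Set (Set V), 𝒰.Finite ∧ 𝒰.ncard ≤ S.ncard ∧ S ⊆ ⋃₀ 𝒰 ∧ ∀ U ∈ 𝒰, diam U = δ := by
  obtain ⟨v, hv⟩ := exists_norm_eq V hδ
  refine ⟨(fun x => {x, x + v}) '' S, hS.image _, ncard_image_le hS,
    fun x hx => ⟨_, mem_image_of_mem _ hx, mem_insert _ _⟩, ?_⟩
  rintro _ ⟨x, -, rfl⟩
  rw [diam_pair, dist_self_add_right, hv]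

section GridCube

variable {ι : Type*}

def gridCube (η : ℝ) (k : ι → ℤ) : Set (EuclideanSpace ℝ ι) :=
  {x | ∀ i, x i ∈ Icc (k i * η) (k i * η + η)}

theorem mem_gridCube_floor {η : ℝ} (hη : 0 < η) (x : EuclideanSpace ℝ ι) :
    x ∈ gridCube η (fun i => ⌊x i / η⌋) := fun i =>
  ⟨(le_div_iff₀ hη).1 (Int.floor_le _), by
    have := (div_lt_iff₀ hη).1 (Int.lt_floor_add_one (x i / η)); linarith⟩

theorem dist_le_of_mem_gridCube [Fintype ι] {η : ℝ} {k : ι → ℤ} (hη : 0 ≤ η)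
    {x y : EuclideanSpace ℝ ι} (hx : x ∈ gridCube η k) (hy : y ∈ gridCube η k) :
    dist x y ≤ √(Fintype.card ι) * η := by
  rw [EuclideanSpace.dist_eq]
  calc √(∑ i, dist (x i) (y i) ^ 2) ≤ √(∑ _i : ι, η ^ 2) := by
        gcongr with i
        exact (Real.dist_le_of_mem_Icc (hx i) (hy i)).trans_eq (by ring)
    _ = √(Fintype.card ι) * η := by
        rw [Finset.sum_const, Finset.card_univ, nsmul_eq_mul, Real.sqrt_mul (Nat.cast_nonneg _),
          Real.sqrt_sq hη]

theorem diam_gridCube [Fintype ι] {η : ℝ} (hη : 0 ≤ η) (k : ι → ℤ) :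
    diam (gridCube η k) = √(Fintype.card ι) * η := by
  let a : EuclideanSpace ℝ ι := WithLp.toLp 2 fun i => k i * η
  let b : EuclideanSpace ℝ ι := WithLp.toLp 2 fun i => k i * η + η
  have ha : a ∈ gridCube η k := fun i => ⟨le_rfl, by simp [a, hη]⟩
  have hb : b ∈ gridCube η k := fun i => ⟨by simp [b, hη], le_rfl⟩
  have hab : dist a b = √(Fintype.card ι) * η := by
    simp [a, b, EuclideanSpace.dist_eq, abs_of_nonneg hη, Real.sqrt_mul, hη]
  refine le_antisymm (diam_le_of_forall_dist_le (by positivity)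
    fun x hx y hy => dist_le_of_mem_gridCube hη hx hy) (hab ▸ dist_le_diam_of_mem ?_ ha hb)
  exact isBounded_iff.2 ⟨_, fun x hx y hy => dist_le_of_mem_gridCube hη hx hy⟩

theorem exists_gridCube_cover_closedBall [Fintype ι] {r η : ℝ} (hr : 0 ≤ r) (hη : 0 < η) :
    ∃ 𝒰 : Set (Set (EuclideanSpace ℝ ι)), 𝒰.Finite ∧
      (𝒰.ncard : ℝ) ≤ (2 * r / η + 2) ^ Fintype.card ι ∧ closedBall 0 r ⊆ ⋃₀ 𝒰 ∧
      ∀ U ∈ 𝒰, diam U = √(Fintype.card ι) * η := by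
  classical
  set K := Finset.Icc ⌊-(r / η)⌋ ⌊r / η⌋
  set grid := Fintype.piFinset fun _ : ι => K
  have hK : (K.card : ℝ) ≤ 2 * r / η + 2 := by
    have hrη : 0 ≤ r / η := div_nonneg hr hη.le
    have hle : ⌊-(r / η)⌋ ≤ ⌊r / η⌋ + 1 := by
      have := Int.floor_mono (show -(r / η) ≤ r / η by linarith)
      omega
    have hcard : (K.card : ℝ) = ⌊r / η⌋ + 1 - ⌊-(r / η)⌋ := by
      exact_mod_cast Int.card_Icc_of_le _ _ hle
    have h1 := Int.floor_le (r / η)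
    have h2 := Int.lt_floor_add_one (-(r / η))
    rw [hcard]
    linarith [mul_div_assoc 2 r η]
  refine ⟨gridCube η '' (grid : Set (ι → ℤ)), grid.finite_toSet.image _, ?_, ?_, ?_⟩
  · have himage : (gridCube η '' (grid : Set (ι → ℤ))).ncard ≤ grid.card :=
      (ncard_image_le grid.finite_toSet).trans_eq (ncard_coe_finset grid)
    calc ((gridCube η '' (grid : Set (ι → ℤ))).ncard : ℝ) ≤ grid.card := Nat.cast_le.2 himage
      _ = (K.card : ℝ) ^ Fintype.card ι := by
          rw [Fintype.card_piFinset, Finset.prod_const, Finset.card_univ, Nat.cast_pow]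
      _ ≤ _ := by gcongr
  · intro x hx
    refine ⟨_, mem_image_of_mem _ ?_, mem_gridCube_floor hη x⟩
    refine Fintype.mem_piFinset.2 fun i =>
      Finset.mem_Icc.2 ⟨Int.floor_mono ?_, Int.floor_mono ?_⟩
    all_goals
      have := (abs_le.1 ((Real.norm_eq_abs _).symm.trans_le
        ((PiLp.norm_apply_le x i).trans (mem_closedBall_zero_iff.1 hx))))
    · rw [← neg_div]
      gcongr
      linarith
    · gcongr
      linarith
  · rintro _ ⟨k, -, rfl⟩
    exact diam_gridCube hη.le k

theorem exists_cover_of_subset_union_closedBall [Fintype ι] [Nonempty ι]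
    {E S : Set (EuclideanSpace ℝ ι)} (hS : S.Finite) {r δ ρ : ℝ} (t : ℝ) (hr : 0 ≤ r)
    (hδ : 0 < δ) (hδρ : δ ≤ ρ) (hE : E ⊆ S ∪ closedBall 0 r) :
    ∃ 𝒰 : Set (Set (EuclideanSpace ℝ ι)), 𝒰.Countable ∧ E ⊆ ⋃₀ 𝒰 ∧
      (∀ U ∈ 𝒰, δ ≤ diam U ∧ diam U ≤ ρ) ∧
      coverSum t 𝒰 ≤ ENNReal.ofReal
        (S.ncard * δ ^ t + (2 * √(Fintype.card ι) * r / ρ + 2) ^ Fintype.card ι * ρ ^ t) := by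
  have hρ : 0 < ρ := hδ.trans_le hδρ
  have hn : 0 < √(Fintype.card ι) := Real.sqrt_pos.2 (Nat.cast_pos.2 Fintype.card_pos)
  obtain ⟨𝒜, h𝒜, h𝒜S, hS𝒜, h𝒜diam⟩ := exists_finite_cover_diam_eq hS hδ.le
  obtain ⟨ℬ, hℬ, hℬcard, hrℬ, hℬdiam⟩ :=
    exists_gridCube_cover_closedBall (ι := ι) hr (div_pos hρ hn)
  rw [show 2 * r / (ρ / √(Fintype.card ι)) = 2 * √(Fintype.card ι) * r / ρ by field_simp]
    at hℬcard
  rw [show √(Fintype.card ι) * (ρ / √(Fintype.card ι)) = ρ by field_simp] at hℬdiam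
  refine ⟨𝒜 ∪ ℬ, (h𝒜.union hℬ).countable, hE.trans ((union_subset_union hS𝒜 hrℬ).trans
    (sUnion_union _ _).symm.subset), ?_, ?_⟩
  · rintro U (hU | hU)
    · exact ⟨(h𝒜diam U hU).ge, (h𝒜diam U hU).le.trans hδρ⟩
    · exact ⟨hδρ.trans (hℬdiam U hU).ge, (hℬdiam U hU).le⟩
  · calc coverSum t (𝒜 ∪ ℬ) ≤ coverSum t 𝒜 + coverSum t ℬ := coverSum_union_le t 𝒜 ℬ
      _ = ENNReal.ofReal (𝒜.ncard * δ ^ t) + ENNReal.ofReal (ℬ.ncard * ρ ^ t) := by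
          rw [coverSum_eq_of_diam_eq h𝒜 h𝒜diam, coverSum_eq_of_diam_eq hℬ hℬdiam]
      _ ≤ _ := by
          rw [← ENNReal.ofReal_add (by positivity) (by positivity)]
          gcongr

end GridCube

theorem eventually_le_rpow_of_limsup_lt {B : ℕ → ℝ} {l : ℝ} (hl : 0 ≤ l)
    (h : limsup (fun n : ℕ => ((Real.log (B n) / Real.log n : ℝ) : EReal)) atTop < l) :
    ∀ᶠ n : ℕ in atTop, B n ≤ (n : ℝ) ^ l := by
  filter_upwards [eventually_lt_of_limsup_lt h, eventually_ge_atTop 2] with n hlt hn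
  have hn1 : (1 : ℝ) < n := by exact_mod_cast hn
  rcases le_or_gt (B n) 1 with hB1 | hB1
  · exact hB1.trans (Real.one_le_rpow hn1.le hl)
  · rw [EReal.coe_lt_coe_iff, div_lt_iff₀ (Real.log_pos hn1)] at hlt
    exact ((Real.lt_rpow_iff_log_lt (by linarith) (by linarith)).2 hlt).le

theorem exists_exponent_of_lt {θ l p d t : ℝ} (hθ : 0 < θ) (hl : 0 < l) (hp : 0 < p)
    (hd : 0 < d) (ht : θ * l * d / (p * d + θ * l) < t) :
    ∃ γ, 0 < γ ∧ γ * l < t ∧ γ * p < θ ∧ θ * (d - t) < γ * p * d := by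
  have ht0 : 0 < t := (by positivity : 0 < θ * l * d / (p * d + θ * l)).trans ht
  have hst : θ * l * d < t * (p * d + θ * l) := (div_lt_iff₀ (by positivity)).1 ht
  have h1 : θ * (d - t) / (p * d) < t / l := by
    rw [div_lt_div_iff₀ (by positivity) hl]
    nlinarith
  have h2 : θ * (d - t) / (p * d) < θ / p := by
    rw [div_lt_div_iff₀ (by positivity) hp]
    nlinarith [mul_pos (mul_pos hθ hp) ht0]
  obtain ⟨γ, hlo, hhi⟩ :=
    exists_between (max_lt (lt_min (div_pos ht0 hl) (div_pos hθ hp)) (lt_min h1 h2))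
  rw [max_lt_iff] at hlo
  rw [lt_min_iff] at hhi
  refine ⟨γ, hlo.1, (lt_div_iff₀ hl).1 hhi.1, (lt_div_iff₀ hp).1 hhi.2, ?_⟩
  linarith [(div_lt_iff₀ (by positivity)).1 hlo.2]

theorem tendsto_rpow_nhdsGT_zero {q : ℝ} (hq : 0 < q) :
    Tendsto (fun δ : ℝ => δ ^ q) (𝓝[>] 0) (𝓝 0) := by
  simpa [Real.zero_rpow hq.ne'] using
    (Real.continuousAt_rpow_const 0 q (.inr hq.le)).tendsto.mono_left nhdsWithin_le_nhds

theorem rpow_mul_rpow_le_of_le_two_mul {δ x γ l t : ℝ} (hδ : 0 < δ) (hl : 0 ≤ l) (hx : 0 ≤ x)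
    (hxδ : x ≤ 2 * δ ^ (-γ)) : x ^ l * δ ^ t ≤ 2 ^ l * δ ^ (t - γ * l) := by
  calc x ^ l * δ ^ t ≤ (2 * δ ^ (-γ)) ^ l * δ ^ t := by gcongr
    _ = 2 ^ l * δ ^ (t - γ * l) := by
        rw [Real.mul_rpow zero_le_two (by positivity), ← Real.rpow_mul hδ.le, mul_assoc,
          ← Real.rpow_add hδ]
        ring_nf

theorem gridCubeCost_le {δ x c γ p θ t : ℝ} (n : ℕ) (hδ : 0 < δ) (hδ1 : δ ≤ 1)
    (hc : 0 ≤ c) (hp : 0 ≤ p) (hγθ : γ * p ≤ θ) (hxδ : δ ^ (-γ) ≤ x) :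
    (2 * c * x ^ (-p) / δ ^ θ + 2) ^ n * (δ ^ θ) ^ t ≤
      (2 * c + 2) ^ n * δ ^ ((γ * p - θ) * n + θ * t) := by
  have hx : 0 < x := (Real.rpow_pos_of_pos hδ _).trans_le hxδ
  have hxp : x ^ (-p) ≤ δ ^ (γ * p) := by
    calc x ^ (-p) ≤ (δ ^ (-γ)) ^ (-p) :=
          Real.rpow_le_rpow_of_nonpos (by positivity) hxδ (by linarith)
      _ = δ ^ (γ * p) := by rw [← Real.rpow_mul hδ.le, neg_mul_neg]
  have hone : 1 ≤ δ ^ (γ * p - θ) :=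
    Real.one_le_rpow_of_pos_of_le_one_of_nonpos hδ hδ1 (by linarith)
  have hbase : 2 * c * x ^ (-p) / δ ^ θ + 2 ≤ (2 * c + 2) * δ ^ (γ * p - θ) := by
    calc 2 * c * x ^ (-p) / δ ^ θ + 2 ≤ 2 * c * δ ^ (γ * p) / δ ^ θ + 2 := by gcongr
      _ = 2 * c * δ ^ (γ * p - θ) + 2 := by rw [Real.rpow_sub hδ, mul_div_assoc]
      _ ≤ (2 * c + 2) * δ ^ (γ * p - θ) := by nlinarith
  calc (2 * c * x ^ (-p) / δ ^ θ + 2) ^ n * (δ ^ θ) ^ t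
      ≤ ((2 * c + 2) * δ ^ (γ * p - θ)) ^ n * (δ ^ θ) ^ t := by gcongr
    _ = (2 * c + 2) ^ n * δ ^ ((γ * p - θ) * n + θ * t) := by
        rw [mul_pow, ← Real.rpow_natCast (δ ^ (γ * p - θ)), ← Real.rpow_mul hδ.le,
          ← Real.rpow_mul hδ.le, mul_assoc, ← Real.rpow_add hδ]

theorem subset_union_closedBall_of_subset_concentric {d : ℕ} {p : ℝ} (hp : 0 < p)
    {E : Set (EuclideanSpace ℝ (Fin d))} (hE : E ⊆ concentric d p) {M : ℕ} (hM : 1 ≤ M) :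
    E ⊆ (⋃ i ∈ Finset.Icc 1 M, E ∩ {x | ‖x‖ = (i : ℝ) ^ (-p)}) ∪
      closedBall 0 ((M : ℝ) ^ (-p)) := by
  intro x hx
  obtain ⟨n, hn, hnorm⟩ := hE hx
  rcases le_or_gt n M with hnM | hMn
  · exact Or.inl (mem_biUnion (Finset.mem_Icc.2 ⟨hn, hnM⟩) ⟨hx, hnorm⟩)
  · refine Or.inr (mem_closedBall_zero_iff.2 (hnorm.trans_le ?_))
    exact Real.rpow_le_rpow_of_nonpos (by exact_mod_cast hM) (by exact_mod_cast hMn.le)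
      (by linarith)

theorem exists_cover_of_subset_concentric {d : ℕ} (hd : 0 < d) {p : ℝ} (hp : 0 < p)
    {E : Set (EuclideanSpace ℝ (Fin d))} (hE : E ⊆ concentric d p) {b : ℕ → ℕ}
    (hb : ∀ i : ℕ, 1 ≤ i → (E ∩ {x | ‖x‖ = (i : ℝ) ^ (-p)}).Finite ∧
      (E ∩ {x | ‖x‖ = (i : ℝ) ^ (-p)}).ncard = b i)
    {M : ℕ} (hM : 1 ≤ M) (t : ℝ) {δ ρ : ℝ} (hδ : 0 < δ) (hδρ : δ ≤ ρ) :
    ∃ 𝒰 : Set (Set (EuclideanSpace ℝ (Fin d))), 𝒰.Countable ∧ E ⊆ ⋃₀ 𝒰 ∧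
      (∀ U ∈ 𝒰, δ ≤ diam U ∧ diam U ≤ ρ) ∧
      coverSum t 𝒰 ≤ ENNReal.ofReal ((∑ i ∈ Finset.Icc 1 M, (b i : ℝ)) * δ ^ t +
        (2 * √d * (M : ℝ) ^ (-p) / ρ + 2) ^ d * ρ ^ t) := by
  have : Nonempty (Fin d) := ⟨⟨0, hd⟩⟩
  have hS := (Finset.Icc 1 M).finite_toSet.biUnion fun i hi => (hb i (Finset.mem_Icc.1 hi).1).1
  obtain ⟨𝒰, h𝒰, hE𝒰, hdiam, hsum⟩ := exists_cover_of_subset_union_closedBall hS t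
    (by positivity) hδ hδρ (subset_union_closedBall_of_subset_concentric hp hE hM)
  refine ⟨𝒰, h𝒰, hE𝒰, hdiam, hsum.trans (ENNReal.ofReal_le_ofReal ?_)⟩
  have hcard : (⋃ i ∈ Finset.Icc 1 M, E ∩ {x | ‖x‖ = (i : ℝ) ^ (-p)}).ncard ≤
      ∑ i ∈ Finset.Icc 1 M, b i :=
    ((Finset.Icc 1 M).set_ncard_biUnion_le _).trans_eq
      (Finset.sum_congr rfl fun i hi => (hb i (Finset.mem_Icc.1 hi).1).2)
  rw [Fintype.card_fin]
  gcongr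
  exact_mod_cast hcard

theorem updim_le_of_limsup_lt {d : ℕ} (hd : 0 < d) {p : ℝ} (hp : 0 < p)
    {E : Set (EuclideanSpace ℝ (Fin d))} (hE : E ⊆ concentric d p) {b : ℕ → ℕ}
    (hb : ∀ i : ℕ, 1 ≤ i → (E ∩ {x | ‖x‖ = (i : ℝ) ^ (-p)}).Finite ∧
      (E ∩ {x | ‖x‖ = (i : ℝ) ^ (-p)}).ncard = b i)
    {l : ℝ} (hl : 0 < l)
    (hlim : limsup (fun n : ℕ =>
      ((Real.log (∑ i ∈ Finset.Icc 1 n, (b i : ℝ)) / Real.log n : ℝ) : EReal)) atTop < l)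
    {θ : ℝ} (hθ : 0 < θ) (hθ1 : θ ≤ 1) :
    updim θ E ≤ θ * l * d / (p * d + θ * l) := by
  refine le_of_forall_gt_imp_ge_of_dense fun t ht => ?_
  have ht0 : 0 < t := (by positivity : 0 < θ * l * d / (p * d + θ * l)).trans ht
  obtain ⟨γ, hγ, hγl, hγp, hγd⟩ := exists_exponent_of_lt hθ hl hp (Nat.cast_pos.2 hd) ht
  obtain ⟨N, hN⟩ := eventually_atTop.1 (eventually_le_rpow_of_limsup_lt hl.le hlim)
  set M : ℝ → ℕ := fun δ => ⌈δ ^ (-γ)⌉₊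
  have hM : Tendsto M (𝓝[>] 0) atTop :=
    tendsto_nat_ceil_atTop.comp (tendsto_rpow_neg_nhdsGT_zero (neg_neg_of_pos hγ))
  have hsmall : ∀ᶠ δ in 𝓝[>] 0, δ ∈ Ioo 0 1 ∧ N ≤ M δ ∧ 1 ≤ M δ :=
    Eventually.and (Ioo_mem_nhdsGT one_pos)
      ((hM.eventually_ge_atTop N).and (hM.eventually_ge_atTop 1))
  refine updim_le_of_eventually_coverSum_le (c := fun δ =>
    (∑ i ∈ Finset.Icc 1 (M δ), (b i : ℝ)) * δ ^ t +
      (2 * √d * (M δ : ℝ) ^ (-p) / δ ^ θ + 2) ^ d * (δ ^ θ) ^ t) ht0.le ?_ ?_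
  · have hbound : Tendsto (fun δ : ℝ => 2 ^ l * δ ^ (t - γ * l) +
        (2 * √d + 2) ^ d * δ ^ ((γ * p - θ) * d + θ * t)) (𝓝[>] 0) (𝓝 0) := by
      simpa using ((tendsto_rpow_nhdsGT_zero (by linarith)).const_mul _).add
        ((tendsto_rpow_nhdsGT_zero (by linarith)).const_mul _)
    refine tendsto_of_tendsto_of_tendsto_of_le_of_le' tendsto_const_nhds hbound ?_ ?_
    · filter_upwards [self_mem_nhdsWithin] with δ (hδ : 0 < δ)
      positivity
    · filter_upwards [hsmall] with δ ⟨⟨hδ0, hδ1⟩, hNM, _⟩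
      have hδγ : 1 ≤ δ ^ (-γ) :=
        Real.one_le_rpow_of_pos_of_le_one_of_nonpos hδ0 hδ1.le (by linarith)
      gcongr ?_ + ?_
      · exact (mul_le_mul_of_nonneg_right (hN _ hNM) (by positivity)).trans
          (rpow_mul_rpow_le_of_le_two_mul hδ0 hl.le (Nat.cast_nonneg _)
            (Nat.ceil_lt_two_mul (by linarith)).le)
      · exact gridCubeCost_le d hδ0 hδ1.le (by positivity) hp.le hγp.le (Nat.le_ceil _)
  · filter_upwards [hsmall] with δ ⟨⟨hδ0, hδ1⟩, _, hM1⟩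
    exact exists_cover_of_subset_concentric hd hp hE hb hM1 t hδ0
      (Real.self_le_rpow_of_le_one hδ0.le hδ1.le hθ1)

theorem EReal.exists_pos_coe_gt {x : EReal} (hx : x < ⊤) : ∃ l : ℝ, 0 < l ∧ x < l := by
  obtain ⟨y, hxy, -⟩ := EReal.lt_iff_exists_real_btwn.1 hx
  exact ⟨max 1 y, by positivity, hxy.trans_le (EReal.coe_le_coe_iff.2 (le_max_right _ _))⟩

theorem stmt13 (d : ℕ) (hd : 2 ≤ d) (p : ℝ) (hp : 0 < p)
    (E : Set (EuclideanSpace ℝ (Fin d))) (hE : E ⊆ concentric d p) (b : ℕ → ℕ)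
    (hb : ∀ i : ℕ, 1 ≤ i → (E ∩ {x | ‖x‖ = (i : ℝ) ^ (-p)}).Finite ∧
      (E ∩ {x | ‖x‖ = (i : ℝ) ^ (-p)}).ncard = b i) :
    (∀ l : ℝ, 0 < l →
      limsup (fun n : ℕ =>
          ((Real.log (∑ i ∈ Finset.Icc 1 n, (b i : ℝ)) / Real.log n : ℝ) : EReal)) atTop
        < (l : EReal) →
      ∀ θ : ℝ, 0 < θ → θ ≤ 1 → updim θ E ≤ θ * l * d / (p * d + θ * l)) ∧
    (limsup (fun n : ℕ =>
        ((Real.log (∑ i ∈ Finset.Icc 1 n, (b i : ℝ)) / Real.log n : ℝ) : EReal)) atTop < ⊤ →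
      Tendsto (fun θ : ℝ => updim θ E) (nhdsWithin 0 (Set.Ioi 0)) (nhds 0)) := by
  have hd0 : 0 < d := by omega
  refine ⟨fun l hl hlim θ hθ hθ1 => updim_le_of_limsup_lt hd0 hp hE hb hl hlim hθ hθ1,
    fun hlim => ?_⟩
  obtain ⟨l, hl, hlim⟩ := EReal.exists_pos_coe_gt hlim
  have hbound : ContinuousAt (fun θ : ℝ => θ * l * d / (p * d + θ * l)) 0 := by
    fun_prop (disch := positivity)
  refine tendsto_updim_nhdsGT_zero
    (by simpa using hbound.tendsto.mono_left nhdsWithin_le_nhds) ?_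
  filter_upwards [Ioo_mem_nhdsGT one_pos] with θ ⟨hθ, hθ1⟩
  exact updim_le_of_limsup_lt hd0 hp hE hb hl hlim hθ hθ1.le
end

section
/- Let d ≥ 2 be an integer, p > 0, and let E ⊆ C_p^d be a set such that for each i ∈ ℕ the intersection of E with the sphere of radius i^{-p} centred at the origin is a finite set of cardinality b_i. If l > 0 satisfies liminf_{n→∞} log(Σ_{i=1}^{n} b_i)/log(n) < l, then for all θ ∈ (0,1], lodim_θ(E) ≤ θ·l·d/(p·d + θ·l). In particular, if liminf_{n→∞} log(Σ_{i=1}^{n} b_i)/log(n) < ∞, then lodim_θ(E) → 0 as θ → 0⁺, so the lower intermediate dimensions of E are continuous at zero. -/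
open Set Metric Filter

/-!
Let `δ = n ^ (-β)`, where `n` runs through the infinitely many indices with
`∑_{i ≤ n} b i ≤ n ^ l` supplied by the liminf hypothesis. The points of `E` on the `n` outermost
spheres are covered by at most `n ^ l` balls of diameter `δ`; the rest of `E` lies in the ball of
radius `n ^ (-p)`, which a volume-packing argument covers by at most `(4 n ^ (βθ - p) + 1) ^ d`
balls of diameter `δ ^ θ`. The resulting `s`-cost
`n ^ (l - βs) + (4 n ^ (βθ - p) + 1) ^ d n ^ (-βθs)` tends to `0` as soon as `l < βs` and
`βθ(d - s) < pd`, and such a `β` exists precisely when `θld / (pd + θl) < s < d`.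
Continuity at `0` follows from `θld / (pd + θl) ≤ (l / p) θ`.
-/

open MeasureTheory Module
open scoped ENNReal NNReal Topology

lemma lodim_nonneg {X : Type*} [PseudoMetricSpace X] (θ : ℝ) (E : Set X) : 0 ≤ lodim θ E :=
  Real.sInf_nonneg fun _ hs => hs.1

section TwoScaleCover

variable {X : Type*} [NormedAddCommGroup X] [NormedSpace ℝ X] [Nontrivial X]

lemma tsum_diam_rpow_image_closedBall_le {A : Set X} (hA : A.Finite) {r : ℝ} (hr : 0 ≤ r)
    (s : ℝ) :
    ∑' U : ((fun a => closedBall a (r / 2)) '' A), ENNReal.ofReal (diam (U : Set X) ^ s)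
      ≤ A.ncard * ENNReal.ofReal (r ^ s) := by
  calc ∑' U : ((fun a => closedBall a (r / 2)) '' A), ENNReal.ofReal (diam (U : Set X) ^ s)
      = ∑' _ : ((fun a => closedBall a (r / 2)) '' A), ENNReal.ofReal (r ^ s) := by
        refine tsum_congr ?_
        rintro ⟨_, a, -, rfl⟩
        rw [diam_closedBall_eq a (by positivity), mul_div_cancel₀ r two_ne_zero]
    _ = ((fun a => closedBall a (r / 2)) '' A).encard * ENNReal.ofReal (r ^ s) := by
        rw [ENNReal.tsum_const, ENat.card_coe_set_eq]
    _ ≤ A.ncard * ENNReal.ofReal (r ^ s) := by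
        have := hA.cast_ncard_eq ▸ encard_image_le (fun a => closedBall a (r / 2)) A
        gcongr
        exact_mod_cast this

lemma lodim_le_of_forall_two_scale_cover {E : Set X} {θ s : ℝ} (hs : 0 ≤ s) (hθ : θ ≤ 1)
    (h : ∀ ε > 0, ∀ δ₀ > 0, ∃ δ, 0 < δ ∧ δ < δ₀ ∧ δ ≤ 1 ∧ ∃ A B : Set X, A.Finite ∧ B.Finite ∧
      E ⊆ (⋃ a ∈ A, closedBall a (δ / 2)) ∪ ⋃ b ∈ B, closedBall b (δ ^ θ / 2) ∧
      A.ncard * δ ^ s + B.ncard * (δ ^ θ) ^ s ≤ ε) :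
    lodim θ E ≤ s := by
  refine csInf_le ⟨0, fun _ ht => ht.1⟩ ⟨hs, fun ε hε δ₀ hδ₀ => ?_⟩
  obtain ⟨δ, hδ, hδδ₀, hδ1, A, B, hA, hB, hEcov, hcost⟩ := h ε hε δ₀ hδ₀
  have hδθ : δ ≤ δ ^ θ := by
    simpa using Real.rpow_le_rpow_of_exponent_ge hδ hδ1 hθ
  have hδθ' : 0 < δ ^ θ := Real.rpow_pos_of_pos hδ θ
  refine ⟨δ, hδ, hδδ₀, (fun a => closedBall a (δ / 2)) '' A ∪
    (fun b => closedBall b (δ ^ θ / 2)) '' B, ((hA.image _).union (hB.image _)).countable,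
    ?_, ?_, ?_⟩
  · intro x hx
    have hx' := hEcov hx
    simp only [mem_union, mem_iUnion] at hx'
    rcases hx' with ⟨a, ha, hxa⟩ | ⟨b, hb, hxb⟩
    · exact ⟨_, Or.inl ⟨a, ha, rfl⟩, hxa⟩
    · exact ⟨_, Or.inr ⟨b, hb, rfl⟩, hxb⟩
  · rintro U (⟨a, -, rfl⟩ | ⟨b, -, rfl⟩)
    · rw [diam_closedBall_eq a (by positivity)]
      constructor <;> linarith
    · rw [diam_closedBall_eq b (by positivity)]
      constructor <;> linarith
  · calc _ ≤ _ := ENNReal.tsum_union_le (fun U => ENNReal.ofReal (diam U ^ s)) _ _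
      _ ≤ A.ncard * ENNReal.ofReal (δ ^ s) + B.ncard * ENNReal.ofReal ((δ ^ θ) ^ s) := by
        gcongr
        · exact tsum_diam_rpow_image_closedBall_le hA hδ.le s
        · exact tsum_diam_rpow_image_closedBall_le hB hδθ'.le s
      _ = ENNReal.ofReal (A.ncard * δ ^ s + B.ncard * (δ ^ θ) ^ s) := by
        rw [ENNReal.ofReal_add (by positivity) (by positivity),
          ENNReal.ofReal_mul (by positivity), ENNReal.ofReal_mul (by positivity),
          ENNReal.ofReal_natCast, ENNReal.ofReal_natCast]
      _ ≤ ENNReal.ofReal ε := ENNReal.ofReal_le_ofReal hcost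

end TwoScaleCover

section Packing

variable {E : Type*} [NormedAddCommGroup E] [NormedSpace ℝ E] [FiniteDimensional ℝ E]
  {x : E} {r : ℝ}

lemma Finset.card_le_of_isSeparated_subset_closedBall {ρ : ℝ≥0} (hr : 0 ≤ r)
    (hρ : 0 < ρ) {F : Finset E} (hF : (F : Set E) ⊆ closedBall x r)
    (hsep : IsSeparated (ρ : ℝ≥0∞) (F : Set E)) :
    (F.card : ℝ) ≤ ((2 * r + ρ) / ρ) ^ finrank ℝ E := by
  let _ : MeasurableSpace E := borel E
  have : BorelSpace E := ⟨rfl⟩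
  set μ : Measure E := Measure.addHaar
  have hρ' : (0 : ℝ) < ρ := hρ
  have hdisj : (F : Set E).PairwiseDisjoint fun c => ball c (ρ / 2) := by
    intro a ha b hb hab
    refine ball_disjoint_ball ?_
    have h := hsep ha hb hab
    simp only [edist_dist, ← ENNReal.ofReal_coe_nnreal] at h
    linarith [(ENNReal.ofReal_lt_ofReal_iff_of_nonneg (NNReal.coe_nonneg ρ)).mp h]
  have hsub : (⋃ c ∈ F, ball c (ρ / 2)) ⊆ ball x (r + ρ / 2) := by
    refine iUnion₂_subset fun c hc => ball_subset_ball' ?_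
    have := hF hc
    rw [mem_closedBall] at this
    linarith
  have hvol : ∑ c ∈ F, μ (ball c (ρ / 2)) ≤ μ (ball x (r + ρ / 2)) := by
    rw [← measure_biUnion_finset hdisj (fun _ _ => measurableSet_ball)]
    exact measure_mono hsub
  simp only [Measure.addHaar_ball_of_pos μ _ (half_pos hρ'),
    Measure.addHaar_ball_of_pos μ _ (by positivity : 0 < r + ρ / 2), Finset.sum_const,
    nsmul_eq_mul, ← mul_assoc] at hvol
  have hunit : μ (ball 0 1) ≠ 0 := (measure_ball_pos μ 0 one_pos).ne'
  rw [ENNReal.mul_le_mul_iff_left hunit measure_ball_lt_top.ne, ← ENNReal.ofReal_natCast,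
    ← ENNReal.ofReal_mul (by positivity), ENNReal.ofReal_le_ofReal_iff (by positivity)] at hvol
  rw [show (2 * r + ρ) / ρ = (r + ρ / 2) / (ρ / 2) by field_simp, div_pow,
    le_div_iff₀ (by positivity)]
  exact hvol

lemma exists_finite_cover_closedBall (x : E) (hr : 0 ≤ r) {ρ : ℝ} (hρ : 0 < ρ) :
    ∃ C : Set E, C.Finite ∧ closedBall x r ⊆ ⋃ c ∈ C, closedBall c ρ ∧
      (C.ncard : ℝ) ≤ ((2 * r + ρ) / ρ) ^ finrank ℝ E := by
  lift ρ to ℝ≥0 using hρ.le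
  simp_rw [← isCover_iff_subset_iUnion_closedBall]
  set N : ℝ := ((2 * r + ρ) / ρ) ^ finrank ℝ E
  have hbound : ∀ C : Set E, C.Finite → C ⊆ closedBall x r → IsSeparated (ρ : ℝ≥0∞) C →
      (C.ncard : ℝ) ≤ N := fun C hC hCx hsep => by
    rw [ncard_eq_toFinset_card C hC]
    exact Finset.card_le_of_isSeparated_subset_closedBall hr hρ (by simpa using hCx)
      (by simpa using hsep)
  have hpack : packingNumber ρ (closedBall x r) ≠ ⊤ := by
    refine ne_top_of_le_ne_top (ENat.natCast_ne_top ⌊N⌋₊)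
      (iSup₂_le fun C hCx => iSup_le fun hsep => ?_)
    by_contra! hlarge
    obtain ⟨t, htC, ht⟩ := exists_subset_encard_eq (Order.add_one_le_of_lt hlarge)
    have htfin : t.Finite := finite_of_encard_eq_coe ht
    have := hbound t htfin (htC.trans hCx) (hsep.subset htC)
    rw [← htfin.cast_ncard_eq] at ht
    norm_cast at ht
    rw [ht] at this
    push_cast at this
    linarith [Nat.lt_floor_add_one N]
  have hfin : (maximalSeparatedSet ρ (closedBall x r)).Finite := by
    rw [← encard_ne_top_iff, encard_maximalSeparatedSet hpack]
    exact hpack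
  exact ⟨_, hfin, isCover_maximalSeparatedSet hpack,
    hbound _ hfin maximalSeparatedSet_subset isSeparated_maximalSeparatedSet⟩

end Packing

lemma exists_scale_exponent {θ l p d s : ℝ} (hθ : 0 < θ) (hl : 0 < l) (hp : 0 < p) (hd : 0 < d)
    (hs₀ : θ * l * d / (p * d + θ * l) < s) (hsd : s < d) :
    ∃ β, l < β * s ∧ β * θ * (d - s) < p * d := by
  have hs : 0 < s := lt_of_le_of_lt (by positivity) hs₀
  rw [div_lt_iff₀ (by positivity)] at hs₀
  obtain ⟨β, hβl, hβd⟩ : ∃ β, l / s < β ∧ β < p * d / (θ * (d - s)) := by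
    refine exists_between ((div_lt_div_iff₀ hs (by nlinarith)).mpr ?_)
    nlinarith
  refine ⟨β, (div_lt_iff₀ hs).mp hβl, ?_⟩
  rw [lt_div_iff₀ (by nlinarith)] at hβd
  linarith

lemma tendsto_two_scale_cost {l β θ p s : ℝ} {d : ℕ} (hd : d ≠ 0) (hl : l < β * s)
    (hβd : β * θ * (d - s) < p * d) (hβθs : 0 < β * θ * s) :
    Tendsto (fun n : ℕ => (n : ℝ) ^ l * ((n : ℝ) ^ (-β)) ^ s +
      ((2 * (n : ℝ) ^ (-p) + ((n : ℝ) ^ (-β)) ^ θ / 2) / (((n : ℝ) ^ (-β)) ^ θ / 2)) ^ d *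
        (((n : ℝ) ^ (-β)) ^ θ) ^ s) atTop (𝓝 0) := by
  have hd' : (0 : ℝ) < d := by positivity
  -- Writing `(δ ^ θ) ^ s` as a `d`-th power turns the second summand into `(o(1)) ^ d`.
  have hlim : Tendsto (fun t : ℝ => t ^ (-(β * s - l)) +
      (4 * t ^ (-(p - β * θ + β * θ * s / d)) + t ^ (-(β * θ * s / d))) ^ d) atTop (𝓝 0) := by
    have h1 := tendsto_rpow_neg_atTop (sub_pos.mpr hl)
    have h2 := tendsto_rpow_neg_atTop (y := p - β * θ + β * θ * s / d) (by
      rw [div_eq_mul_inv]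
      nlinarith [mul_inv_cancel₀ hd'.ne', inv_pos.mpr hd'])
    have h3 := tendsto_rpow_neg_atTop (y := β * θ * s / d) (by positivity)
    simpa [hd] using h1.add (((h2.const_mul 4).add h3).pow d)
  refine (hlim.comp tendsto_natCast_atTop_atTop).congr' ?_
  filter_upwards [eventually_gt_atTop 0] with n hn
  have ht : (0 : ℝ) < n := by exact_mod_cast hn
  simp only [Function.comp, ← Real.rpow_mul ht.le]
  have hsplit : (n : ℝ) ^ (-(p - β * θ + β * θ * s / d)) =
      (n : ℝ) ^ (-p) / (n : ℝ) ^ (-β * θ) * (n : ℝ) ^ (-(β * θ * s / d)) := by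
    rw [← Real.rpow_sub ht, ← Real.rpow_add ht]
    ring_nf
  have hpow : (n : ℝ) ^ (-β * θ * s) = ((n : ℝ) ^ (-(β * θ * s / d))) ^ d := by
    rw [← Real.rpow_natCast, ← Real.rpow_mul ht.le]
    field_simp
  have hfirst : (n : ℝ) ^ (-(β * s - l)) = (n : ℝ) ^ l * (n : ℝ) ^ (-β * s) := by
    rw [← Real.rpow_add ht]
    ring_nf
  rw [hfirst, hsplit, hpow, ← mul_pow]
  congr 3
  field_simp
  ring

lemma frequently_le_rpow_of_liminf_log_div_log_lt {S : ℕ → ℝ} (hS : ∀ n, 0 ≤ S n) {l : ℝ}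
    (h : liminf (fun n : ℕ => ((Real.log (S n) / Real.log n : ℝ) : EReal)) atTop < l) :
    ∃ᶠ n : ℕ in atTop, S n ≤ (n : ℝ) ^ l := by
  refine ((frequently_lt_of_liminf_lt (by isBoundedDefault) h).and_eventually
    (eventually_ge_atTop 2)).mono fun n ⟨hlt, hn⟩ => ?_
  have hn : (1 : ℝ) < n := by exact_mod_cast hn
  rcases (hS n).eq_or_lt with h0 | hpos
  · rw [← h0]
    exact Real.rpow_nonneg (by linarith) l
  · rw [← Real.log_le_log_iff hpos (by positivity), Real.log_rpow (by linarith),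
      ← div_le_iff₀ (Real.log_pos hn)]
    exact_mod_cast hlt.le

lemma tendsto_nhdsGT_zero_of_le_mul {f : ℝ → ℝ} {C : ℝ} (h0 : ∀ θ, 0 ≤ f θ)
    (hle : ∀ θ, 0 < θ → θ ≤ 1 → f θ ≤ C * θ) : Tendsto f (𝓝[>] 0) (𝓝 0) := by
  have hlin : Tendsto (fun θ => C * θ) (𝓝[>] 0) (𝓝 0) := by
    simpa using (tendsto_id.const_mul C).mono_left (nhdsWithin_le_nhds (a := (0 : ℝ)))
  refine squeeze_zero' (Eventually.of_forall h0) ?_ hlin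
  filter_upwards [Ioo_mem_nhdsGT one_pos] with θ hθ
  exact hle θ hθ.1 hθ.2.le

section Concentric

variable {d : ℕ} {p : ℝ}

lemma concentric_subset_union_closedBall (hp : 0 ≤ p) {n : ℕ} (hn : 1 ≤ n) :
    concentric d p ⊆
      (⋃ i ∈ Finset.Icc 1 n, {x | ‖x‖ = (i : ℝ) ^ (-p)}) ∪ closedBall 0 ((n : ℝ) ^ (-p)) := by
  rintro x ⟨m, hm, hx⟩
  rcases le_or_gt m n with hmn | hnm
  · exact Or.inl (mem_iUnion₂.mpr ⟨m, Finset.mem_Icc.mpr ⟨hm, hmn⟩, hx⟩)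
  · refine Or.inr (mem_closedBall_zero_iff.mpr (hx.trans_le ?_))
    exact Real.rpow_le_rpow_of_nonpos (by exact_mod_cast hn) (by exact_mod_cast hnm.le)
      (neg_nonpos.mpr hp)

variable {E : Set (EuclideanSpace ℝ (Fin d))} {b : ℕ → ℕ}

lemma finite_inter_biUnion_norm_eq_and_ncard_le (hb : ∀ i : ℕ, 1 ≤ i →
      (E ∩ {x | ‖x‖ = (i : ℝ) ^ (-p)}).Finite ∧ (E ∩ {x | ‖x‖ = (i : ℝ) ^ (-p)}).ncard = b i)
    (n : ℕ) :
    (E ∩ ⋃ i ∈ Finset.Icc 1 n, {x | ‖x‖ = (i : ℝ) ^ (-p)}).Finite ∧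
      ((E ∩ ⋃ i ∈ Finset.Icc 1 n, {x | ‖x‖ = (i : ℝ) ^ (-p)}).ncard : ℝ) ≤
        ∑ i ∈ Finset.Icc 1 n, (b i : ℝ) := by
  rw [inter_iUnion₂]
  refine ⟨(Finset.Icc 1 n).finite_toSet.biUnion fun i hi => (hb i (Finset.mem_Icc.mp hi).1).1, ?_⟩
  calc _ ≤ ((∑ i ∈ Finset.Icc 1 n, (E ∩ {x | ‖x‖ = (i : ℝ) ^ (-p)}).ncard : ℕ) : ℝ) := by
        exact_mod_cast Finset.set_ncard_biUnion_le _ _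
    _ = ∑ i ∈ Finset.Icc 1 n, (b i : ℝ) := by
        push_cast
        exact Finset.sum_congr rfl fun i hi => by rw [(hb i (Finset.mem_Icc.mp hi).1).2]

lemma lodim_le_of_frequently_sum_le_rpow_of_lt (hd : 0 < d) (hp : 0 < p)
    (hE : E ⊆ concentric d p)
    (hb : ∀ i : ℕ, 1 ≤ i →
      (E ∩ {x | ‖x‖ = (i : ℝ) ^ (-p)}).Finite ∧ (E ∩ {x | ‖x‖ = (i : ℝ) ^ (-p)}).ncard = b i)
    {l : ℝ} (hl : 0 < l) (hfreq : ∃ᶠ n : ℕ in atTop, ∑ i ∈ Finset.Icc 1 n, (b i : ℝ) ≤ (n : ℝ) ^ l)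
    {θ : ℝ} (hθ : 0 < θ) (hθ1 : θ ≤ 1) {s : ℝ}
    (hs₀ : θ * l * d / (p * d + θ * l) < s) (hsd : s < d) :
    lodim θ E ≤ s := by
  have : NeZero d := ⟨hd.ne'⟩
  have hs : 0 < s := lt_of_le_of_lt (by positivity) hs₀
  obtain ⟨β, hβl, hβd⟩ := exists_scale_exponent hθ hl hp (by exact_mod_cast hd) hs₀ hsd
  have hβ : 0 < β := pos_of_mul_pos_left (hl.trans hβl) hs.le
  have hcost := tendsto_two_scale_cost hd.ne' hβl hβd (by positivity)
  have hscale := (tendsto_rpow_neg_atTop hβ).comp tendsto_natCast_atTop_atTop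
  refine lodim_le_of_forall_two_scale_cover hs.le hθ1 fun ε hε δ₀ hδ₀ => ?_
  obtain ⟨n, hsum, hcostn, hδn, hn⟩ := (hfreq.and_eventually ((hcost.eventually
    (ge_mem_nhds hε)).and ((hscale.eventually_lt_const hδ₀).and (eventually_ge_atTop 1)))).exists
  set δ : ℝ := (n : ℝ) ^ (-β)
  have hn' : (1 : ℝ) ≤ n := by exact_mod_cast hn
  have hδ : 0 < δ := Real.rpow_pos_of_pos (by linarith) _
  obtain ⟨B, hBfin, hBcov, hBcard⟩ := exists_finite_cover_closedBall
    (0 : EuclideanSpace ℝ (Fin d)) (Real.rpow_nonneg (Nat.cast_nonneg n) (-p))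
    (half_pos (Real.rpow_pos_of_pos hδ θ))
  obtain ⟨hAfin, hAcard⟩ := finite_inter_biUnion_norm_eq_and_ncard_le hb n
  refine ⟨δ, hδ, hδn, Real.rpow_le_one_of_one_le_of_nonpos hn' (by linarith), _, B, hAfin,
    hBfin, fun x hx => ?_, ?_⟩
  · rcases concentric_subset_union_closedBall hp.le hn (hE hx) with hxA | hxB
    · exact Or.inl (mem_iUnion₂.mpr ⟨x, ⟨hx, hxA⟩, mem_closedBall_self (by positivity)⟩)
    · exact Or.inr (hBcov hxB)
  · rw [finrank_euclideanSpace_fin] at hBcard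
    refine le_trans ?_ hcostn
    gcongr
    exact hAcard.trans hsum

lemma lodim_le_of_frequently_sum_le_rpow (hd : 0 < d) (hp : 0 < p) (hE : E ⊆ concentric d p)
    (hb : ∀ i : ℕ, 1 ≤ i →
      (E ∩ {x | ‖x‖ = (i : ℝ) ^ (-p)}).Finite ∧ (E ∩ {x | ‖x‖ = (i : ℝ) ^ (-p)}).ncard = b i)
    {l : ℝ} (hl : 0 < l) (hfreq : ∃ᶠ n : ℕ in atTop, ∑ i ∈ Finset.Icc 1 n, (b i : ℝ) ≤ (n : ℝ) ^ l)
    {θ : ℝ} (hθ : 0 < θ) (hθ1 : θ ≤ 1) :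
    lodim θ E ≤ θ * l * d / (p * d + θ * l) := by
  have hd' : (0 : ℝ) < d := by exact_mod_cast hd
  have hlt : θ * l * d / (p * d + θ * l) < d := by
    rw [div_lt_iff₀ (by positivity)]
    nlinarith [mul_pos hp (mul_pos hd' hd')]
  refine le_of_forall_gt_imp_ge_of_dense fun s hs => ?_
  calc lodim θ E ≤ min s ((θ * l * d / (p * d + θ * l) + d) / 2) :=
        lodim_le_of_frequently_sum_le_rpow_of_lt hd hp hE hb hl hfreq hθ hθ1
          (lt_min hs (by linarith)) ((min_le_right _ _).trans_lt (by linarith))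
    _ ≤ s := min_le_left _ _

end Concentric

theorem stmt14 (d : ℕ) (hd : 2 ≤ d) (p : ℝ) (hp : 0 < p)
    (E : Set (EuclideanSpace ℝ (Fin d))) (hE : E ⊆ concentric d p) (b : ℕ → ℕ)
    (hb : ∀ i : ℕ, 1 ≤ i → (E ∩ {x | ‖x‖ = (i : ℝ) ^ (-p)}).Finite ∧
      (E ∩ {x | ‖x‖ = (i : ℝ) ^ (-p)}).ncard = b i) :
    (∀ l : ℝ, 0 < l →
      liminf (fun n : ℕ =>
          ((Real.log (∑ i ∈ Finset.Icc 1 n, (b i : ℝ)) / Real.log n : ℝ) : EReal)) atTop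
        < (l : EReal) →
      ∀ θ : ℝ, 0 < θ → θ ≤ 1 → lodim θ E ≤ θ * l * d / (p * d + θ * l)) ∧
    (liminf (fun n : ℕ =>
        ((Real.log (∑ i ∈ Finset.Icc 1 n, (b i : ℝ)) / Real.log n : ℝ) : EReal)) atTop < ⊤ →
      Tendsto (fun θ : ℝ => lodim θ E) (nhdsWithin 0 (Set.Ioi 0)) (nhds 0)) := by
  have hd0 : 0 < d := by omega
  have hsum : ∀ n, 0 ≤ ∑ i ∈ Finset.Icc 1 n, (b i : ℝ) := fun n => by positivity
  refine ⟨fun l hl hlim θ hθ hθ1 => lodim_le_of_frequently_sum_le_rpow hd0 hp hE hb hl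
    (frequently_le_rpow_of_liminf_log_div_log_lt hsum hlim) hθ hθ1, fun hlim => ?_⟩
  obtain ⟨x, hx, -⟩ := EReal.lt_iff_exists_real_btwn.mp hlim
  set l := max x 1
  have hl : 0 < l := lt_max_of_lt_right one_pos
  have hfreq := frequently_le_rpow_of_liminf_log_div_log_lt hsum
    (hx.trans_le (EReal.coe_le_coe_iff.mpr (le_max_left x 1)))
  refine tendsto_nhdsGT_zero_of_le_mul (C := l / p) (lodim_nonneg · E) fun θ hθ hθ1 =>
    (lodim_le_of_frequently_sum_le_rpow hd0 hp hE hb hl hfreq hθ hθ1).trans ?_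
  have hd' : (0 : ℝ) < d := by exact_mod_cast hd0
  calc θ * l * d / (p * d + θ * l) ≤ θ * l * d / (p * d) :=
        div_le_div_of_nonneg_left (by positivity) (by positivity) (by nlinarith)
    _ = l / p * θ := by field_simp
end
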